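/- Let R = K[x_1][x_2;θ_2,δ_2]···[x_N;θ_N,δ_N] be a CGL extension whose presentation has a D-form R_D = D⟨x_1,…,x_N⟩ for a unital subring D ⊆ K. Let d ∈ D \ {0} and u, v ∈ R_D \ {0} be such that d divides uv in R_D. If the leading coefficient of v lies in D^×, then d divides u in R_D. -/

import Mathlib

open scoped Classical

namespace GYint

/-! ## Subalgebras generated by subsets of the generators -/

variable (K : Type) [Field K] {R : Type} [Ring R] [Algebra K R]

/-- The `K`-subalgebra of `R` generated by the generators `x i` with `P i`. -/
def xAdj {N : ℕ} (x : Fin N → R) (P : Fin N → Prop) : Subalgebra K R :=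
  Algebra.adjoin K {r : R | ∃ i : Fin N, P i ∧ r = x i}

/-- `R_k` : the subalgebra generated by the first `k` generators (0-indexed: indices `< k`). -/
def Rk {N : ℕ} (x : Fin N → R) (k : ℕ) : Subalgebra K R :=
  xAdj K x (fun i => (i : ℕ) < k)

/-- The interval subalgebra `R_{[a,b]}` generated by `x_a, …, x_b` (0-indexed, inclusive). -/
def Rint {N : ℕ} (x : Fin N → R) (a b : ℕ) : Subalgebra K R :=
  xAdj K x (fun i => a ≤ (i : ℕ) ∧ (i : ℕ) ≤ b)

variable {K}

/-- The ordered monomial `x^f = x_1^{f 1} ⋯ x_N^{f N}`. -/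
def oMono {N : ℕ} (x : Fin N → R) (f : Fin N → ℕ) : R :=
  ((List.finRange N).map (fun i => x i ^ f i)).prod

/-- Evaluation at `h ∈ (Kˣ)^r` of the character with exponent vector `m`. -/
def charEval {r : ℕ} (h : Fin r → Kˣ) (m : Fin r → ℤ) : Kˣ :=
  ∏ i, h i ^ m i

/-- The multiplicative bicharacter `Ω_t` on `ℤ^N` associated to a multiplicatively
skew-symmetric matrix `t`, with `Ω_t(e_j, e_k) = t j k`. -/
def omegaU {N : ℕ} (t : Fin N → Fin N → Kˣ) (f g : Fin N → ℤ) : Kˣ :=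
  ∏ p : Fin N × Fin N, t p.1 p.2 ^ (f p.1 * g p.2)

/-! ## CGL extensions (quantum nilpotent algebras) -/

/-- An iterated skew polynomial (Ore) presentation
`R = K[x_1][x_2; θ_2, δ_2] ⋯ [x_N; θ_N, δ_N]` of a `K`-algebra `R`, together with the
rational torus action data making it a CGL extension (quantum nilpotent algebra).
Here `θ k` and `δ k` are recorded as maps `R → R` whose restrictions to
`R_{k-1} = K⟨x_1,…,x_{k-1}⟩` are, respectively, a `K`-algebra automorphism (with
inverse the restriction of `θinv k`) and a `K`-linear locally nilpotent
`θ_k`-derivation; `x k * a = θ k a * x k + δ k a` for `a ∈ R_{k-1}`; the ordered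
monomials in the generators form a `K`-basis of `R` (so each `R_k` is a free left
`R_{k-1}`-module with basis the powers of `x_k`); each `x k` is an eigenvector of the
torus `H = (Kˣ)^rk` with character `chi k`; `θ k` is implemented by the torus element
`hElt k`, whose eigenvalue `lam k` on `x k` is not a root of unity, and whose
eigenvalue on `x j` (`j < k`) is `lamM k j`, the multiplicatively skew-symmetric
`λ`-matrix of the presentation. -/
structure CGLExt (K : Type) [Field K] (R : Type) [Ring R] [Algebra K R] (N : ℕ) where
  x : Fin N → R
  pbw : Module.Basis (Fin N → ℕ) K R
  pbw_eq : ∀ f, pbw f = oMono x f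
  rk : ℕ
  act : (Fin rk → Kˣ) →* (R ≃ₐ[K] R)
  chi : Fin N → Fin rk → ℤ
  eigen : ∀ (h : Fin rk → Kˣ) (k : Fin N), act h (x k) = (charEval h (chi k) : K) • x k
  θ : Fin N → R → R
  θinv : Fin N → R → R
  δ : Fin N → R → R
  θ_mem : ∀ k : Fin N, ∀ a ∈ Rk K x (k : ℕ), θ k a ∈ Rk K x (k : ℕ)
  θinv_mem : ∀ k : Fin N, ∀ a ∈ Rk K x (k : ℕ), θinv k a ∈ Rk K x (k : ℕ)
  δ_mem : ∀ k : Fin N, ∀ a ∈ Rk K x (k : ℕ), δ k a ∈ Rk K x (k : ℕ)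
  θ_linear : ∀ (k : Fin N) (s : K), ∀ a ∈ Rk K x (k : ℕ), ∀ b ∈ Rk K x (k : ℕ),
    θ k (s • a + b) = s • θ k a + θ k b
  θ_mul : ∀ k : Fin N, ∀ a ∈ Rk K x (k : ℕ), ∀ b ∈ Rk K x (k : ℕ), θ k (a * b) = θ k a * θ k b
  θ_one : ∀ k : Fin N, θ k 1 = 1
  θ_left_inv : ∀ k : Fin N, ∀ a ∈ Rk K x (k : ℕ), θinv k (θ k a) = a
  θ_right_inv : ∀ k : Fin N, ∀ a ∈ Rk K x (k : ℕ), θ k (θinv k a) = a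
  δ_linear : ∀ (k : Fin N) (s : K), ∀ a ∈ Rk K x (k : ℕ), ∀ b ∈ Rk K x (k : ℕ),
    δ k (s • a + b) = s • δ k a + δ k b
  δ_tw : ∀ k : Fin N, ∀ a ∈ Rk K x (k : ℕ), ∀ b ∈ Rk K x (k : ℕ),
    δ k (a * b) = δ k a * b + θ k a * δ k b
  ore : ∀ k : Fin N, ∀ a ∈ Rk K x (k : ℕ), x k * a = θ k a * x k + δ k a
  δ_nil : ∀ k : Fin N, ∀ a ∈ Rk K x (k : ℕ), ∃ n : ℕ, (δ k)^[n] a = 0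
  hElt : Fin N → Fin rk → Kˣ
  lam : Fin N → Kˣ
  hElt_theta : ∀ k : Fin N, ∀ a ∈ Rk K x (k : ℕ), act (hElt k) a = θ k a
  hElt_lam : ∀ k : Fin N, act (hElt k) (x k) = (lam k : K) • x k
  lam_nru : ∀ (k : Fin N) (n : ℕ), 0 < n → lam k ^ n ≠ 1
  lamM : Fin N → Fin N → Kˣ
  lamM_spec : ∀ k j : Fin N, (j : ℕ) < (k : ℕ) → act (hElt k) (x j) = (lamM k j : K) • x j
  lamM_diag : ∀ k, lamM k k = 1
  lamM_skew : ∀ k j, lamM j k = (lamM k j)⁻¹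

/-- A symmetric CGL extension: additionally `δ_k (x_j) ∈ K⟨x_{j+1},…,x_{k-1}⟩` for all
`j < k` (via the Ore relation, `δ_k(x_j) = x_k x_j - λ_{kj} x_j x_k`), and for each `j`
there is an element `h_j^*` of the torus acting on `x_k` by `λ_{kj}⁻¹` for `k > j` and
on `x_j` by an eigenvalue `λ_j^*` which is not a root of unity. -/
structure SymCGLExt (K : Type) [Field K] (R : Type) [Ring R] [Algebra K R] (N : ℕ)
    extends CGLExt K R N where
  sym_delta : ∀ j k : Fin N, (j : ℕ) < (k : ℕ) →
    x k * x j - (lamM k j : K) • (x j * x k) ∈ Rint K x ((j : ℕ) + 1) ((k : ℕ) - 1)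
  hStar : Fin N → Fin rk → Kˣ
  lamStar : Fin N → Kˣ
  hStar_spec : ∀ j k : Fin N, (j : ℕ) < (k : ℕ) →
    act (hStar j) (x k) = (((lamM k j)⁻¹ : Kˣ) : K) • x k
  hStar_lam : ∀ j : Fin N, act (hStar j) (x j) = (lamStar j : K) • x j
  lamStar_nru : ∀ (j : Fin N) (n : ℕ), 0 < n → lamStar j ^ n ≠ 1

/-- A homogeneous element (`H`-eigenvector with an integral character; `0` is allowed). -/
def IsHomog {N : ℕ} (E : CGLExt K R N) (u : R) : Prop :=
  ∃ m : Fin E.rk → ℤ, ∀ h : Fin E.rk → Kˣ, E.act h u = (charEval h m : K) • u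

/-- `p` is a normal element of the subalgebra `S` : `p S = S p`. -/
def IsNormalIn (S : Subalgebra K R) (p : R) : Prop :=
  (∀ a ∈ S, ∃ b ∈ S, p * a = b * p) ∧ (∀ a ∈ S, ∃ b ∈ S, a * p = p * b)

/-- `p` is a prime element of the subalgebra `S`: a nonzero normal element of `S`
such that `S/(p)` is a domain. -/
def IsPrimeElemIn (S : Subalgebra K R) (p : R) : Prop :=
  p ≠ 0 ∧ p ∈ S ∧ IsNormalIn S p ∧
  ∀ a b : R, a ∈ S → b ∈ S → (∃ c ∈ S, a * b = p * c) →
    (∃ c ∈ S, a = p * c) ∨ (∃ c ∈ S, b = p * c)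

/-! ## Predecessor and successor functions -/

/-- The predecessor function `p(k)` of the level sets of `η` (`⊥` playing the role of `-∞`). -/
noncomputable def predIdx {N : ℕ} {α : Type} (η : Fin N → α) (k : Fin N) : WithBot (Fin N) :=
  (Finset.univ.filter (fun j : Fin N => (j : ℕ) < (k : ℕ) ∧ η j = η k)).max

/-- The successor function `s(k)` of the level sets of `η` (`⊤` playing the role of `+∞`). -/
noncomputable def succIdx {N : ℕ} {α : Type} (η : Fin N → α) (k : Fin N) : WithTop (Fin N) :=
  (Finset.univ.filter (fun j : Fin N => (k : ℕ) < (j : ℕ) ∧ η j = η k)).min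

/-- Iterated successor `s^m(k)`. -/
noncomputable def succIter {N : ℕ} {α : Type} (η : Fin N → α) : ℕ → Fin N → WithTop (Fin N)
  | 0, k => (k : WithTop (Fin N))
  | n + 1, k => WithTop.recTopCoe ⊤ (fun j => succIdx η j) (succIter η n k)

/-- Iterated predecessor `p^m(k)`. -/
noncomputable def predIter {N : ℕ} {α : Type} (η : Fin N → α) : ℕ → Fin N → WithBot (Fin N)
  | 0, k => (k : WithBot (Fin N))
  | n + 1, k => WithBot.recBotCoe ⊥ (fun j => predIdx η j) (predIter η n k)

/-! ## The sequence of homogeneous prime elements, [GY1, Theorem 4.3] -/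

/-- The data of [GY1, Theorem 4.3] for a CGL extension `E`: a function `η : [1,N] → ℤ`,
elements `c_k ∈ R_{k-1}`, and the sequence `y_1, …, y_N` of homogeneous elements defined
by the recursion `y_k = y_{p(k)} x_k - c_k` (resp. `y_k = x_k` when `p(k) = -∞`) such that
for every `k`, `{y_j : j ≤ k, s(j) > k}` is a list of the homogeneous prime elements of
`R_k` up to scalar multiples. -/
structure YSystem {N : ℕ} (E : CGLExt K R N) where
  η : Fin N → ℤ
  y : Fin N → R
  c : Fin N → R
  c_mem : ∀ k : Fin N, c k ∈ Rk K E.x (k : ℕ)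
  y_rec : ∀ k j : Fin N, predIdx η k = (j : WithBot (Fin N)) → y k = y j * E.x k - c k
  y_base : ∀ k : Fin N, predIdx η k = ⊥ → y k = E.x k
  y_homog : ∀ k : Fin N, IsHomog E (y k)
  y_prime : ∀ k j : Fin N, (j : ℕ) ≤ (k : ℕ) →
    (∀ l : Fin N, succIdx η j = (l : WithTop (Fin N)) → (k : ℕ) < (l : ℕ)) →
    IsPrimeElemIn (Rk K E.x ((k : ℕ) + 1)) (y j)
  y_complete : ∀ (k : Fin N) (u : R), IsHomog E u →
    IsPrimeElemIn (Rk K E.x ((k : ℕ) + 1)) u →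
    ∃ j : Fin N, (j : ℕ) ≤ (k : ℕ) ∧
      (∀ l : Fin N, succIdx η j = (l : WithTop (Fin N)) → (k : ℕ) < (l : ℕ)) ∧
      ∃ t : Kˣ, u = (t : K) • y j

/-! ## Leading terms -/

/-- The reverse lexicographic order `f ≺ g` on exponent vectors. -/
def revLexLt {N : ℕ} (f g : Fin N → ℕ) : Prop :=
  ∃ n : Fin N, f n < g n ∧ ∀ m : Fin N, n < m → f m = g m

/-- `b` has leading term `t x^f` with respect to the PBW basis and `≺`. -/
def IsLeadingTerm {N : ℕ} (E : CGLExt K R N) (b : R) (t : K) (f : Fin N → ℕ) : Prop :=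
  t ≠ 0 ∧ E.pbw.repr b f = t ∧
    ∀ g : Fin N → ℕ, E.pbw.repr b g ≠ 0 → g = f ∨ revLexLt g f

/-! ## Interval prime elements of symmetric CGL extensions -/

/-- The `{0,1}`-vector (as natural numbers) supported on the `η`-chain from `a` to `b`,
i.e. on `{l : a ≤ l ≤ b, η l = η a}`; for `b = s^m(a)` this is the exponent vector of
`x_a x_{s(a)} ⋯ x_{s^m(a)}`, i.e. `e_{[a,b]}`. -/
noncomputable def chainIndN {N : ℕ} {α : Type} (η : Fin N → α) (a b : Fin N) : Fin N → ℕ :=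
  fun l => if a ≤ l ∧ l ≤ b ∧ η l = η a then 1 else 0

/-- Integer version of `chainIndN`, the vector `e_{[a,b]} ∈ ℤ^N`. -/
noncomputable def chainIndZ {N : ℕ} {α : Type} (η : Fin N → α) (a b : Fin N) : Fin N → ℤ :=
  fun l => if a ≤ l ∧ l ≤ b ∧ η l = η a then 1 else 0

/-- The standard basis vector `e_i ∈ ℤ^N`. -/
def eVecZ {N : ℕ} (i : Fin N) : Fin N → ℤ := fun l => if l = i then 1 else 0

/-- The vector `ē_j = e_j + e_{p(j)} + ⋯ + e_{p^{O_-(j)}(j)} ∈ ℤ^N`. -/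
noncomputable def ebarZ {N : ℕ} {α : Type} (η : Fin N → α) (j : Fin N) : Fin N → ℤ :=
  fun l => if l ≤ j ∧ η l = η j then 1 else 0

/-- The interval prime elements `y_{[i, s^m(i)]}` of a symmetric CGL extension
([GYbig, Theorem 5.1]): for all `i` and `m ≥ 0` with `s^m(i) ∈ [1,N]`, the element
`yI i (s^m(i))` is the unique homogeneous prime element of the interval subalgebra
`R_{[i, s^m(i)]}` with leading term `x_i x_{s(i)} ⋯ x_{s^m(i)}`. -/
structure IntervalYSystem {N : ℕ} (E : SymCGLExt K R N) (Y : YSystem E.toCGLExt) where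
  yI : Fin N → Fin N → R
  homog : ∀ i k : Fin N, IsHomog E.toCGLExt (yI i k)
  prime : ∀ (i : Fin N) (m : ℕ) (k : Fin N), succIter Y.η m i = (k : WithTop (Fin N)) →
    IsPrimeElemIn (Rint K E.x (i : ℕ) (k : ℕ)) (yI i k)
  lt : ∀ (i : Fin N) (m : ℕ) (k : Fin N), succIter Y.η m i = (k : WithTop (Fin N)) →
    IsLeadingTerm E.toCGLExt (yI i k) 1 (chainIndN Y.η i k)

/-- `y_{[j,k]}` extended by the convention `y_{[s(i), i]} = 1`. -/
def yIext {N : ℕ} (E : SymCGLExt K R N) (Y : YSystem E.toCGLExt)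
    (YI : IntervalYSystem E Y) (j k : Fin N) : R :=
  if (k : ℕ) < (j : ℕ) then 1 else YI.yI j k

/-- The normal elements `u_{[i,s^m(i)]}` of [GYbig, Corollary 5.11]: here `j = s(i)`,
`k' = s^{m-1}(i)`, `k = s^m(i)` and
`u = y_{[i,k']} y_{[j,k]} - Ω_λ(e_i, e_{[j,k']}) y_{[j,k']} y_{[i,k]}`. -/
noncomputable def uElem {N : ℕ} (E : SymCGLExt K R N) (Y : YSystem E.toCGLExt)
    (YI : IntervalYSystem E Y) (i j k' k : Fin N) : R :=
  YI.yI i k' * YI.yI j k -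
    (omegaU E.lamM (eVecZ i) (chainIndZ Y.η j k') : K) • (yIext E Y YI j k' * YI.yI i k)

/-! ## Conditions (A) and (B) and the normalization condition -/

/-- Condition (A): a choice of square roots `ν_{kl} = √λ_{kl}` in `K` such that the
subgroup of `Kˣ` they generate contains no elements of order 2. -/
structure CondA {N : ℕ} (E : CGLExt K R N) where
  ν : Fin N → Fin N → Kˣ
  sq : ∀ k j : Fin N, (j : ℕ) < (k : ℕ) → ν k j ^ 2 = E.lamM k j
  diag : ∀ k, ν k k = 1
  skew : ∀ k j, ν j k = (ν k j)⁻¹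
  no_order_two : ∀ t ∈ Subgroup.closure {u : Kˣ | ∃ k j : Fin N, u = ν k j},
    t ^ 2 = 1 → t = 1

/-- Condition (B): positive integers `d_n`, `n ∈ η([1,N])`, with
`λ_k^{d_{η(l)}} = λ_l^{d_{η(k)}}` whenever `p(k), p(l) ≠ -∞`. -/
def CondB {N : ℕ} (E : CGLExt K R N) (η : Fin N → ℤ) (d : ℤ → ℕ) : Prop :=
  (∀ k : Fin N, 0 < d (η k)) ∧
  ∀ k l : Fin N, predIdx η k ≠ ⊥ → predIdx η l ≠ ⊥ →
    E.lam k ^ d (η l) = E.lam l ^ d (η k)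

/-- The symmetrization scalar `S_ν(f) = ∏_{j<k} ν_{jk}^{-f_j f_k}`. -/
def Snu {N : ℕ} (ν : Fin N → Fin N → Kˣ) (f : Fin N → ℤ) : Kˣ :=
  ∏ p : Fin N × Fin N,
    if (p.1 : ℕ) < (p.2 : ℕ) then ν p.1 p.2 ^ (-(f p.1 * f p.2)) else 1

/-- The normalization condition (6.6) of [GYbig]: the leading coefficient
`π_{[i,s(i)]}` of `u_{[i,s(i)]}` equals `S_ν(-e_i + f_{[i,s(i)]})` for all `i` with
`s(i) ≠ +∞`, where `f_{[i,s(i)]}` is the exponent of the leading term of `u_{[i,s(i)]}`. -/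
def NormCond {N : ℕ} (E : SymCGLExt K R N) (CA : CondA E.toCGLExt)
    (Y : YSystem E.toCGLExt) (YI : IntervalYSystem E Y) : Prop :=
  ∀ i j : Fin N, succIdx Y.η i = (j : WithTop (Fin N)) →
    ∃ f : Fin N → ℕ,
      IsLeadingTerm E.toCGLExt (uElem E Y YI i j i j)
        ((Snu CA.ν (fun l => (f l : ℤ) - eVecZ i l) : Kˣ) : K) f

/-! ## D-forms -/

variable (K)

/-- `t` is a unit of the subring `D ⊆ K`. -/
def isUnitIn (D : Subring K) (t : K) : Prop := t ∈ D ∧ t ≠ 0 ∧ t⁻¹ ∈ D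

/-- The `D`-subring of `R` generated by `D` and the generators `x i` with `P i`. -/
def Dspan (D : Subring K) {N : ℕ} (x : Fin N → R) (P : Fin N → Prop) : Subring R :=
  Subring.closure ((algebraMap K R) '' (D : Set K) ∪ {r : R | ∃ i : Fin N, P i ∧ r = x i})

/-- `(R_D)_k = D⟨x_1,…,x_k⟩` (0-indexed: indices `< k`). -/
def DRk (D : Subring K) {N : ℕ} (x : Fin N → R) (k : ℕ) : Subring R :=
  Dspan K D x (fun i => (i : ℕ) < k)

/-- `R_D = D⟨x_1,…,x_N⟩`. -/
def DRfull (D : Subring K) {N : ℕ} (x : Fin N → R) : Subring R :=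
  Dspan K D x (fun _ => True)

/-- `(R_D)_{[a,b]} = D⟨x_a,…,x_b⟩` (0-indexed, inclusive). -/
def DRint (D : Subring K) {N : ℕ} (x : Fin N → R) (a b : ℕ) : Subring R :=
  Dspan K D x (fun i => a ≤ (i : ℕ) ∧ (i : ℕ) ≤ b)

variable {K}

/-- `D⟨x_1,…,x_N⟩` is a `D`-form of the CGL presentation `E`, i.e. it is an iterated
skew polynomial extension `D[x_1][x_2;θ_2,δ_2]⋯[x_N;θ_N,δ_N]`: each `θ_k` restricts
to an automorphism of `D⟨x_1,…,x_{k-1}⟩`, and each `δ_k` maps `D⟨x_1,…,x_{k-1}⟩`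
into itself. -/
structure IsDForm (D : Subring K) {N : ℕ} (E : CGLExt K R N) : Prop where
  theta_mem : ∀ k : Fin N, ∀ a ∈ Rk K E.x (k : ℕ),
    a ∈ DRk K D E.x (k : ℕ) → E.θ k a ∈ DRk K D E.x (k : ℕ)
  thetainv_mem : ∀ k : Fin N, ∀ a ∈ Rk K E.x (k : ℕ),
    a ∈ DRk K D E.x (k : ℕ) → E.θinv k a ∈ DRk K D E.x (k : ℕ)
  delta_mem : ∀ k : Fin N, ∀ a ∈ Rk K E.x (k : ℕ),
    a ∈ DRk K D E.x (k : ℕ) → E.δ k a ∈ DRk K D E.x (k : ℕ)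

/-- `D ⊆ K` has `K` as its field of fractions. -/
def IsFractionFieldOf (D : Subring K) : Prop :=
  ∀ z : K, ∃ a ∈ D, ∃ b ∈ D, b ≠ 0 ∧ z = a / b

/-- `p` is a normal element of the subring `S` : `p S = S p`. -/
def IsNormalInSR (S : Subring R) (p : R) : Prop :=
  (∀ a ∈ S, ∃ b ∈ S, p * a = b * p) ∧ (∀ a ∈ S, ∃ b ∈ S, a * p = p * b)

/-- `T` is a denominator (two-sided Ore) set in the subring `S` of the domain `R`. -/
def IsDenomSetIn (S : Subring R) (T : Submonoid R) : Prop :=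
  ((T : Set R) ⊆ (S : Set R)) ∧ (0 : R) ∉ T ∧
  (∀ a ∈ S, ∀ s ∈ T, ∃ b ∈ S, ∃ t ∈ T, t * a = b * s) ∧
  (∀ a ∈ S, ∀ s ∈ T, ∃ b ∈ S, ∃ t ∈ T, a * t = s * b)

/-! ## The permutations `Ξ_N` and `Γ_N` -/

/-- The set `Ξ_N ⊆ S_N` of permutations `σ` such that `σ([1,k])` is an interval for
all `k`. -/
def XiN {N : ℕ} : Set (Equiv.Perm (Fin N)) :=
  {σ | ∀ k a b c : Fin N, a ≤ k → b ≤ k → σ a ≤ c → c ≤ σ b → ∃ m : Fin N, m ≤ k ∧ σ m = c}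

/-- The value at position `k` (0-indexed) of the permutation
`σ_{i,j} = [i+1, …, j, i, j+1, …, N, i-1, …, 1]` (here expressed 0-indexed). -/
def gammaVal (N i j : ℕ) (k : Fin N) : ℕ :=
  if (k : ℕ) < j - i then i + 1 + (k : ℕ)
  else if (k : ℕ) = j - i then i
  else if (k : ℕ) ≤ N - 1 - i then (k : ℕ) + i
  else N - 1 - (k : ℕ)

/-- The subset `Γ_N = {σ_{i,j} : i ≤ j} ⊆ Ξ_N`. -/
def GammaN {N : ℕ} : Set (Equiv.Perm (Fin N)) :=
  {σ | ∃ i j : ℕ, i ≤ j ∧ j < N ∧ ∀ k : Fin N, (σ k : ℕ) = gammaVal N i j k}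


/-!
Everything happens inside the `D`-lattice `L_k` spanned by the ordered monomials in the first `k`
generators. Induction along the iterated Ore extension shows that `x^f x^g = t x^(f+g) + (lower
terms)` with `t ∈ D^×` and all terms in `L_k`: moving `x_k^i` past a monomial `x^g` of lower level
produces the `i`-th power of the `θ_k`-eigenvalue of `x^g`, which is a unit of `D` because `θ_k`
and `θ_k⁻¹` both preserve the `D`-form. Consequently `L_k` is a ring, equal to `D⟨x_1, …, x_k⟩`,
and the leading coefficient of `uv` is a `D`-unit times `lc(u) lc(v)`. So if `d ∣ uv` and
`lc(v) ∈ D^×`, then `d` divides `lc(u)` in `D`; subtracting `lc(u) x^f` from `u` and inducting on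
the number of monomials of `u` gives `d ∣ u`.
-/

instance Pi.Colex.isOrderedCancelAddMonoid {ι : Type*} [LinearOrder ι] {α : ι → Type*}
    [∀ i, AddCommMonoid (α i)] [∀ i, PartialOrder (α i)] [∀ i, IsOrderedCancelAddMonoid (α i)] :
    IsOrderedCancelAddMonoid (Colex (∀ i, α i)) where
  add_le_add_left _ _ hxy z :=
    hxy.elim (fun hxyz => hxyz ▸ le_rfl) fun ⟨i, hi⟩ =>
      Or.inr ⟨i, fun j hji => congr_arg (· + z j) (hi.1 j hji), add_lt_add_left hi.2 _⟩
  le_of_add_le_add_left _ _ _ hxyz :=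
    hxyz.elim (fun h => (add_left_cancel h).le) fun ⟨i, hi⟩ =>
      Or.inr ⟨i, fun j hj => add_left_cancel (hi.1 j hj), lt_of_add_lt_add_left hi.2⟩

theorem Module.Basis.repr_sub_smul_self {ι S M : Type*} [Ring S] [AddCommGroup M] [Module S M]
    (b : Module.Basis ι S M) (x : M) (i : ι) :
    b.repr (x - b.repr x i • b i) = (b.repr x).erase i := by
  rw [map_sub, map_smul, b.repr_self, Finsupp.smul_single, smul_eq_mul, mul_one,
    sub_eq_iff_eq_add, Finsupp.erase_add_single]

theorem exists_map_list_prod_eq_smul {S A : Type*} [CommSemiring S] [Semiring A] [Algebra S A]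
    (φ : A →ₐ[S] A) (L : List A) (hL : ∀ a ∈ L, ∃ c : S, φ a = c • a) :
    ∃ c : S, φ L.prod = c • L.prod := by
  induction L with
  | nil => exact ⟨1, by simp⟩
  | cons a L ih =>
    obtain ⟨c, hc⟩ := hL a List.mem_cons_self
    obtain ⟨c', hc'⟩ := ih fun b hb => hL b (List.mem_cons_of_mem a hb)
    exact ⟨c * c', by rw [List.prod_cons, map_mul, hc, hc', smul_mul_smul_comm]⟩

theorem isUnitIn_mul {D : Subring K} {s t : K} (hs : isUnitIn K D s) (ht : isUnitIn K D t) :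
    isUnitIn K D (s * t) :=
  ⟨mul_mem hs.1 ht.1, mul_ne_zero hs.2.1 ht.2.1, mul_inv s t ▸ mul_mem hs.2.2 ht.2.2⟩

theorem isUnitIn_pow {D : Subring K} {t : K} (ht : isUnitIn K D t) (n : ℕ) :
    isUnitIn K D (t ^ n) :=
  ⟨pow_mem ht.1 n, pow_ne_zero n ht.2.1, inv_pow t n ▸ pow_mem ht.2.2 n⟩

variable {N : ℕ}

theorem revLexLt_iff_toColex_lt {f g : Fin N → ℕ} : revLexLt f g ↔ toColex f < toColex g :=
  ⟨fun ⟨n, hlt, heq⟩ => ⟨n, heq, hlt⟩, fun ⟨n, heq, hlt⟩ => ⟨n, hlt, heq⟩⟩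

def SupportedBelow (k : ℕ) (f : Fin N → ℕ) : Prop :=
  ∀ l : Fin N, k ≤ (l : ℕ) → f l = 0

namespace SupportedBelow

variable {k : ℕ} {f g : Fin N → ℕ}

theorem of_card_le (hk : N ≤ k) (f : Fin N → ℕ) : SupportedBelow k f :=
  fun l hl => absurd l.isLt (by omega)

theorem zero : SupportedBelow k (0 : Fin N → ℕ) := fun _ _ => rfl

theorem eq_zero (hf : SupportedBelow 0 f) : f = 0 :=
  funext fun l => hf l l.val.zero_le

theorem add (hf : SupportedBelow k f) (hg : SupportedBelow k g) : SupportedBelow k (f + g) :=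
  fun l hl => by simp [hf l hl, hg l hl]

theorem mono {k' : ℕ} (hf : SupportedBelow k f) (hk : k ≤ k') : SupportedBelow k' f :=
  fun l hl => hf l (hk.trans hl)

theorem of_toColex_lt (hf : SupportedBelow k f) (hlt : toColex g < toColex f) :
    SupportedBelow k g := by
  obtain ⟨n, heq, hn⟩ := hlt
  intro l hl
  have hnk : (n : ℕ) < k := by
    by_contra! hkn
    exact absurd hn (by simp [hf n hkn])
  simpa [hf l hl] using heq l (Fin.lt_def.2 (hnk.trans_le hl))

theorem single {i : Fin N} (hi : (i : ℕ) < k) (n : ℕ) : SupportedBelow k (Pi.single i n) :=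
  fun l hl => by
    have hli : l ≠ i := fun h => by subst h; omega
    simp [hli]

theorem add_single {i : Fin N} (hf : SupportedBelow i f) (n : ℕ) :
    SupportedBelow (i + 1) (f + Pi.single i n) := by
  intro l hl
  have hli : l ≠ i := fun h => by subst h; omega
  simp [hf l (by omega), Pi.single_eq_of_ne hli]

theorem exists_eq_add_single {i : Fin N} (hf : SupportedBelow (i + 1) f) :
    ∃ f₀ n, SupportedBelow i f₀ ∧ f = f₀ + Pi.single i n := by
  refine ⟨Function.update f i 0, f i, fun l hl => ?_, funext fun l => ?_⟩
  · rcases eq_or_ne l i with rfl | hli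
    · simp
    · rw [Function.update_of_ne hli]
      exact hf l (by have : (l : ℕ) ≠ i := fun h => hli (Fin.ext h); omega)
  · rcases eq_or_ne l i with rfl | hli
    · simp
    · simp [Function.update_of_ne hli, Pi.single_eq_of_ne hli]

end SupportedBelow

theorem toColex_add_single_lt {i : Fin N} {f g : Fin N → ℕ} {n : ℕ} (hg : SupportedBelow i g)
    (hf : SupportedBelow (i + 1) f) (hn : n < f i) : toColex (g + Pi.single i n) < toColex f := by
  refine ⟨i, fun l hl => ?_, by simpa [hg i le_rfl] using hn⟩
  have hli : l ≠ i := ne_of_gt hl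
  simp [hg l (le_of_lt hl), hf l (Nat.succ_le_of_lt hl), Pi.single_eq_of_ne hli]

theorem oMono_zero (x : Fin N → R) : oMono x 0 = 1 :=
  List.prod_eq_one (by simp)

theorem oMono_add_single (x : Fin N → R) {i : Fin N} {f : Fin N → ℕ} (hf : SupportedBelow i f)
    (n : ℕ) : oMono x (f + Pi.single i n) = oMono x f * x i ^ n := by
  obtain ⟨L₁, L₂, hL⟩ := List.append_of_mem (List.mem_finRange i)
  have hsorted := List.pairwise_lt_finRange N
  rw [hL, List.pairwise_append, List.pairwise_cons] at hsorted
  obtain ⟨-, ⟨hi₂, -⟩, hi₁⟩ := hsorted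
  have hlow : L₁.map (fun a => x a ^ (f + Pi.single i n : Fin N → ℕ) a) =
      L₁.map (fun a => x a ^ f a) := List.map_congr_left fun a ha => by
    simp [Pi.single_eq_of_ne (hi₁ a ha i List.mem_cons_self).ne]
  have hhigh (g : Fin N → ℕ) (hg : SupportedBelow (i + 1) g) :
      (L₂.map fun a => x a ^ g a).prod = 1 :=
    List.prod_eq_one fun r hr => by
      obtain ⟨a, ha, rfl⟩ := List.mem_map.1 hr
      rw [hg a (hi₂ a ha), pow_zero]
  rw [oMono, oMono, hL, List.map_append, List.map_cons, List.prod_append, List.prod_cons,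
    List.map_append, List.map_cons, List.prod_append, List.prod_cons, hlow,
    hhigh _ (hf.add_single n), hhigh _ (hf.mono (Nat.le_succ _))]
  simp [hf i le_rfl]

theorem oMono_mem_Rk (x : Fin N → R) {k : ℕ} {f : Fin N → ℕ} (hf : SupportedBelow k f) :
    oMono x f ∈ Rk K x k := by
  refine list_prod_mem fun r hr => ?_
  obtain ⟨i, -, rfl⟩ := List.mem_map.1 hr
  by_cases hi : (i : ℕ) < k
  · exact pow_mem (show x i ∈ Rk K x k from Algebra.subset_adjoin ⟨i, hi, rfl⟩) _
  · rw [hf i (not_lt.1 hi), pow_zero]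
    exact one_mem _

theorem oMono_mem_DRk (D : Subring K) (x : Fin N → R) {k : ℕ} {f : Fin N → ℕ}
    (hf : SupportedBelow k f) : oMono x f ∈ DRk K D x k := by
  refine list_prod_mem fun r hr => ?_
  obtain ⟨i, -, rfl⟩ := List.mem_map.1 hr
  by_cases hi : (i : ℕ) < k
  · exact pow_mem (show x i ∈ DRk K D x k from Subring.subset_closure (Or.inr ⟨i, hi, rfl⟩)) _
  · rw [hf i (not_lt.1 hi), pow_zero]
    exact one_mem _

namespace CGLExt

variable (E : CGLExt K R N) (D : Subring K)

theorem pbw_add_single {i : Fin N} {f : Fin N → ℕ} (hf : SupportedBelow i f) (n : ℕ) :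
    E.pbw (f + Pi.single i n) = E.pbw f * E.x i ^ n := by
  rw [E.pbw_eq, E.pbw_eq, oMono_add_single _ hf]

theorem pbw_zero : E.pbw 0 = 1 := by
  rw [E.pbw_eq, oMono_zero]

theorem pbw_single (i : Fin N) : E.pbw (Pi.single i 1) = E.x i := by
  simpa [E.pbw_zero] using E.pbw_add_single (SupportedBelow.zero (k := i)) 1

theorem exists_act_pbw_eq_smul (h : Fin E.rk → Kˣ) (f : Fin N → ℕ) :
    ∃ c : K, E.act h (E.pbw f) = c • E.pbw f := by
  rw [E.pbw_eq]
  refine exists_map_list_prod_eq_smul (E.act h : R →ₐ[K] R) _ fun a ha => ?_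
  obtain ⟨i, -, rfl⟩ := List.mem_map.1 ha
  exact ⟨_, by rw [AlgEquiv.coe_toAlgHom, map_pow, E.eigen, smul_pow]⟩

theorem theta_eq_act {k : Fin N} {a : R} (ha : a ∈ Rk K E.x k) :
    E.θ k a = E.act (E.hElt k) a :=
  (E.hElt_theta k a ha).symm

def pbwLattice (k : ℕ) : AddSubgroup R :=
  AddSubgroup.closure {r | ∃ c ∈ D, ∃ f, SupportedBelow k f ∧ r = c • E.pbw f}

def pbwSpanLT (f : Fin N → ℕ) : Submodule K R :=
  Submodule.span K (E.pbw '' {g | toColex g < toColex f})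

def pbwSpanLE (f : Fin N → ℕ) : Submodule K R :=
  Submodule.span K (E.pbw '' {g | toColex g ≤ toColex f})

variable {E D} {k : ℕ}

theorem pbw_mem_Rk {f : Fin N → ℕ} (hf : SupportedBelow k f) : E.pbw f ∈ Rk K E.x k :=
  E.pbw_eq f ▸ oMono_mem_Rk E.x hf

theorem theta_smul {i : Fin N} (c : K) {a : R} (ha : a ∈ Rk K E.x i) :
    E.θ i (c • a) = c • E.θ i a := by
  rw [E.theta_eq_act ha, E.theta_eq_act (Subalgebra.smul_mem _ ha c), map_smul]

theorem exists_theta_pbw_eq_smul {i : Fin N} {g : Fin N → ℕ} (hg : SupportedBelow i g) :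
    ∃ Λ : K, E.θ i (E.pbw g) = Λ • E.pbw g := by
  simpa only [E.theta_eq_act (E.pbw_mem_Rk hg)] using E.exists_act_pbw_eq_smul (E.hElt i) g

theorem smul_pbw_mem_pbwLattice {c : K} (hc : c ∈ D) {f : Fin N → ℕ} (hf : SupportedBelow k f) :
    c • E.pbw f ∈ E.pbwLattice D k :=
  AddSubgroup.subset_closure ⟨c, hc, f, hf, rfl⟩

theorem pbw_mem_pbwLattice {f : Fin N → ℕ} (hf : SupportedBelow k f) :
    E.pbw f ∈ E.pbwLattice D k := by
  simpa using smul_pbw_mem_pbwLattice (E := E) D.one_mem hf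

theorem smul_mem_pbwLattice {c : K} (hc : c ∈ D) {r : R} (hr : r ∈ E.pbwLattice D k) :
    c • r ∈ E.pbwLattice D k := by
  induction hr using AddSubgroup.closure_induction with
  | mem r hr =>
    obtain ⟨c', hc', f, hf, rfl⟩ := hr
    rw [smul_smul]
    exact smul_pbw_mem_pbwLattice (mul_mem hc hc') hf
  | zero => simp
  | add a b _ _ ha hb => simpa [smul_add] using add_mem ha hb
  | neg a _ ha => simpa [smul_neg] using neg_mem ha

theorem repr_mem_of_mem_pbwLattice {r : R} (hr : r ∈ E.pbwLattice D k) (g : Fin N → ℕ) :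
    E.pbw.repr r g ∈ D := by
  induction hr using AddSubgroup.closure_induction with
  | mem r hr =>
    obtain ⟨c, hc, f, -, rfl⟩ := hr
    rw [map_smul, E.pbw.repr_self, Finsupp.smul_apply, Finsupp.single_apply, smul_eq_mul]
    split_ifs
    exacts [by simpa using hc, by simp]
  | zero => simp
  | add a b _ _ ha hb => simpa using add_mem ha hb
  | neg a _ ha => simpa using neg_mem ha

theorem pbwLattice_le_span :
    E.pbwLattice D k ≤ (Submodule.span K (E.pbw '' {f | SupportedBelow k f})).toAddSubgroup :=
  AddSubgroup.closure_le _ |>.2 fun _ ⟨c, _, f, hf, hr⟩ =>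
    hr ▸ Submodule.smul_mem _ c (Submodule.subset_span ⟨f, hf, rfl⟩)

theorem mem_Rk_of_mem_pbwLattice {r : R} (hr : r ∈ E.pbwLattice D k) : r ∈ Rk K E.x k := by
  induction hr using AddSubgroup.closure_induction with
  | mem r hr =>
    obtain ⟨c, -, f, hf, rfl⟩ := hr
    exact Subalgebra.smul_mem _ (E.pbw_mem_Rk hf) c
  | zero => exact zero_mem _
  | add a b _ _ ha hb => exact add_mem ha hb
  | neg a _ ha => exact neg_mem ha

theorem mem_DRk_of_mem_pbwLattice {r : R} (hr : r ∈ E.pbwLattice D k) : r ∈ DRk K D E.x k := by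
  induction hr using AddSubgroup.closure_induction with
  | mem r hr =>
    obtain ⟨c, hc, f, hf, rfl⟩ := hr
    rw [Algebra.smul_def]
    exact mul_mem (Subring.subset_closure (Or.inl ⟨c, hc, rfl⟩))
      (E.pbw_eq f ▸ oMono_mem_DRk D E.x hf)
  | zero => exact zero_mem _
  | add a b _ _ ha hb => exact add_mem ha hb
  | neg a _ ha => exact neg_mem ha

theorem mem_of_smul_pbw_mem_pbwLattice {c : K} {f : Fin N → ℕ}
    (h : c • E.pbw f ∈ E.pbwLattice D k) : c ∈ D := by
  simpa using repr_mem_of_mem_pbwLattice h f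

theorem mul_pow_mem_pbwLattice_succ {i : Fin N} {c : R} (hc : c ∈ E.pbwLattice D i) (n : ℕ) :
    c * E.x i ^ n ∈ E.pbwLattice D (i + 1) := by
  refine (AddSubgroup.closure_le
    (K := (E.pbwLattice D (i + 1)).comap (AddMonoidHom.mulRight (E.x i ^ n)))).2 ?_ hc
  rintro _ ⟨c, hc, f, hf, rfl⟩
  simpa [smul_mul_assoc, ← E.pbw_add_single hf] using
    smul_pbw_mem_pbwLattice hc (hf.add_single n)

theorem pbwSpanLT_mono {f g : Fin N → ℕ} (h : toColex f ≤ toColex g) :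
    E.pbwSpanLT f ≤ E.pbwSpanLT g :=
  Submodule.span_mono (Set.image_mono fun _ hf => lt_of_lt_of_le hf h)

theorem repr_eq_zero_of_mem_pbwSpanLT {f : Fin N → ℕ} {r : R} (hr : r ∈ E.pbwSpanLT f) :
    E.pbw.repr r f = 0 :=
  Finsupp.notMem_support_iff.1 fun hf => lt_irrefl (toColex f) (E.pbw.mem_span_image.1 hr hf)

theorem sub_smul_pbw_mem_pbwSpanLT {f : Fin N → ℕ} {r : R} (hr : r ∈ E.pbwSpanLE f) :
    r - E.pbw.repr r f • E.pbw f ∈ E.pbwSpanLT f := by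
  refine E.pbw.mem_span_image.2 fun g hg => ?_
  rw [Module.Basis.repr_sub_smul_self, Finsupp.support_erase, Finset.coe_erase] at hg
  exact lt_of_le_of_ne (E.pbw.mem_span_image.1 hr hg.1) (fun h => hg.2 (toColex_inj.1 h))

theorem mem_pbwSpanLE_of_isLeadingTerm {v : R} {s : K} {g : Fin N → ℕ}
    (hv : IsLeadingTerm E v s g) : v ∈ E.pbwSpanLE g := by
  refine E.pbw.mem_span_image.2 fun g' hg' => ?_
  rcases hv.2.2 g' (Finsupp.mem_support_iff.1 hg') with rfl | hlt
  exacts [le_refl (toColex g'), (revLexLt_iff_toColex_lt.1 hlt).le]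

theorem mul_pow_mem_pbwSpanLT {i : Fin N} {S : Set (Fin N → ℕ)} {f : Fin N → ℕ} {n : ℕ}
    (hS : ∀ g ∈ S, SupportedBelow i g ∧ toColex (g + Pi.single i n) < toColex f) {c : R}
    (hc : c ∈ Submodule.span K (E.pbw '' S)) : c * E.x i ^ n ∈ E.pbwSpanLT f := by
  refine (Submodule.span_le
    (p := (E.pbwSpanLT f).comap (LinearMap.mulRight K (E.x i ^ n)))).2 ?_ hc
  rintro _ ⟨g, hg, rfl⟩
  have : E.pbw (g + Pi.single i n) ∈ E.pbwSpanLT f := Submodule.subset_span ⟨_, (hS g hg).2, rfl⟩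
  simpa [← E.pbw_add_single (hS g hg).1] using this

theorem mul_pow_mem_pbwSpanLT_add_single {i : Fin N} {f : Fin N → ℕ} (hf : SupportedBelow i f)
    {r : R} (hr : r ∈ E.pbwSpanLT f) (n : ℕ) :
    r * E.x i ^ n ∈ E.pbwSpanLT (f + Pi.single i n) :=
  mul_pow_mem_pbwSpanLT (fun _ hg => ⟨hf.of_toColex_lt hg, add_lt_add_left hg _⟩) hr

variable (E D) in
def HasUnitLeadingProducts (k : ℕ) : Prop :=
  ∀ f g, SupportedBelow k f → SupportedBelow k g → ∃ t, isUnitIn K D t ∧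
    ∃ r ∈ E.pbwLattice D k, r ∈ E.pbwSpanLT (f + g) ∧
      E.pbw f * E.pbw g = t • E.pbw (f + g) + r

namespace HasUnitLeadingProducts

variable (hB : E.HasUnitLeadingProducts D k)
include hB

theorem mul_mem_pbwLattice {a b : R} (ha : a ∈ E.pbwLattice D k) (hb : b ∈ E.pbwLattice D k) :
    a * b ∈ E.pbwLattice D k := by
  have hgen {c c' : K} (hc : c ∈ D) (hc' : c' ∈ D) {f g : Fin N → ℕ} (hf : SupportedBelow k f)
      (hg : SupportedBelow k g) : (c • E.pbw f) * (c' • E.pbw g) ∈ E.pbwLattice D k := by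
    obtain ⟨t, ht, r, hr, -, hfg⟩ := hB f g hf hg
    rw [smul_mul_smul_comm, hfg, smul_add, smul_smul]
    exact add_mem (smul_pbw_mem_pbwLattice (mul_mem (mul_mem hc hc') ht.1)
      (hf.add hg)) (smul_mem_pbwLattice (mul_mem hc hc') hr)
  have hleft {c : K} (hc : c ∈ D) {f : Fin N → ℕ} (hf : SupportedBelow k f) :
      (c • E.pbw f) * b ∈ E.pbwLattice D k :=
    (AddSubgroup.closure_le
      (K := (E.pbwLattice D k).comap (AddMonoidHom.mulLeft (c • E.pbw f)))).2
      (by rintro _ ⟨c', hc', g, hg, rfl⟩; exact hgen hc hc' hf hg) hb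
  exact (AddSubgroup.closure_le (K := (E.pbwLattice D k).comap (AddMonoidHom.mulRight b))).2
    (by rintro _ ⟨c, hc, f, hf, rfl⟩; exact hleft hc hf) ha

theorem mem_pbwLattice_of_mem_DRk {s : R} (hs : s ∈ DRk K D E.x k) : s ∈ E.pbwLattice D k := by
  induction hs using Subring.closure_induction with
  | mem r hr =>
    rcases hr with ⟨c, hc, rfl⟩ | ⟨i, hi, rfl⟩
    · simpa [Algebra.algebraMap_eq_smul_one, E.pbw_zero] using
        smul_pbw_mem_pbwLattice (E := E) hc (SupportedBelow.zero (k := k))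
    · simpa [E.pbw_single] using pbw_mem_pbwLattice (E := E) (D := D) (SupportedBelow.single hi 1)
  | zero => exact zero_mem _
  | one =>
    simpa [E.pbw_zero] using pbw_mem_pbwLattice (E := E) (D := D) (SupportedBelow.zero (k := k))
  | add a b _ _ ha hb => exact add_mem ha hb
  | neg a _ ha => exact neg_mem ha
  | mul a b _ _ ha hb => exact hB.mul_mem_pbwLattice ha hb

end HasUnitLeadingProducts

section OreStep

variable {i : Fin N} (hD : IsDForm D E) (hB : E.HasUnitLeadingProducts D i)
include hD hB

theorem mapsTo_theta : Set.MapsTo (E.θ i) (E.pbwLattice D i) (E.pbwLattice D i) := fun _ hr =>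
  hB.mem_pbwLattice_of_mem_DRk (hD.theta_mem i _ (mem_Rk_of_mem_pbwLattice hr)
    (mem_DRk_of_mem_pbwLattice hr))

theorem mapsTo_thetainv : Set.MapsTo (E.θinv i) (E.pbwLattice D i) (E.pbwLattice D i) :=
  fun _ hr => hB.mem_pbwLattice_of_mem_DRk (hD.thetainv_mem i _ (mem_Rk_of_mem_pbwLattice hr)
    (mem_DRk_of_mem_pbwLattice hr))

theorem mapsTo_delta : Set.MapsTo (E.δ i) (E.pbwLattice D i) (E.pbwLattice D i) := fun _ hr =>
  hB.mem_pbwLattice_of_mem_DRk (hD.delta_mem i _ (mem_Rk_of_mem_pbwLattice hr)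
    (mem_DRk_of_mem_pbwLattice hr))

theorem isUnitIn_of_theta_pbw {g : Fin N → ℕ} (hg : SupportedBelow i g) {Λ : K}
    (hΛ : E.θ i (E.pbw g) = Λ • E.pbw g) : isUnitIn K D Λ := by
  have hL : E.pbw g ∈ E.pbwLattice D i := pbw_mem_pbwLattice hg
  have hR : E.pbw g ∈ Rk K E.x i := mem_Rk_of_mem_pbwLattice hL
  have hΛ0 : Λ ≠ 0 := by
    rintro rfl
    have hθ0 : E.θ i 0 = 0 := by simpa using E.theta_smul 0 hR
    apply E.pbw.ne_zero g
    calc E.pbw g = E.θinv i (E.θ i (E.pbw g)) := (E.θ_left_inv i _ hR).symm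
      _ = E.θinv i (E.θ i 0) := by rw [hΛ, zero_smul, hθ0]
      _ = 0 := E.θ_left_inv i 0 (zero_mem _)
  have hθinv : E.θinv i (E.pbw g) = Λ⁻¹ • E.pbw g := by
    conv_lhs => rw [← inv_smul_smul₀ hΛ0 (E.pbw g), ← hΛ, ← E.theta_smul _ hR]
    exact E.θ_left_inv i _ (Subalgebra.smul_mem _ hR _)
  exact ⟨mem_of_smul_pbw_mem_pbwLattice (hΛ ▸ mapsTo_theta hD hB hL), hΛ0,
    mem_of_smul_pbw_mem_pbwLattice (hθinv ▸ mapsTo_thetainv hD hB hL)⟩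

end OreStep

variable (E D) in
def pbwDegLT (i : Fin N) (m : ℕ) : AddSubgroup R :=
  AddSubgroup.closure {r | ∃ c ∈ E.pbwLattice D i, ∃ n < m, r = c * E.x i ^ n}

section DegreeFiltration

variable {i : Fin N} {m : ℕ}

theorem mul_pow_mem_pbwDegLT {c : R} (hc : c ∈ E.pbwLattice D i) {n : ℕ} (hn : n < m) :
    c * E.x i ^ n ∈ E.pbwDegLT D i m :=
  AddSubgroup.subset_closure ⟨c, hc, n, hn, rfl⟩

theorem pbwDegLT_le_pbwLattice : E.pbwDegLT D i m ≤ E.pbwLattice D (i + 1) :=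
  (AddSubgroup.closure_le _).2 fun _ ⟨_, hc, n, _, hr⟩ => hr ▸ mul_pow_mem_pbwLattice_succ hc n

theorem pbwDegLT_le_pbwSpanLT {f : Fin N → ℕ} (hf : SupportedBelow (i + 1) f) (hm : m ≤ f i) :
    E.pbwDegLT D i m ≤ (E.pbwSpanLT f).toAddSubgroup := by
  refine (AddSubgroup.closure_le _).2 ?_
  rintro _ ⟨c, hc, n, hn, rfl⟩
  exact mul_pow_mem_pbwSpanLT (S := {g | SupportedBelow i g})
    (fun g hg => ⟨hg, toColex_add_single_lt hg hf (by omega)⟩) (pbwLattice_le_span hc)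

theorem mul_pow_mem_pbwDegLT_add {r : R} (hr : r ∈ E.pbwDegLT D i m) (n : ℕ) :
    r * E.x i ^ n ∈ E.pbwDegLT D i (m + n) := by
  refine (AddSubgroup.closure_le
    (K := (E.pbwDegLT D i (m + n)).comap (AddMonoidHom.mulRight (E.x i ^ n)))).2 ?_ hr
  rintro _ ⟨c, hc, n', hn', rfl⟩
  simpa [mul_assoc, ← pow_add] using mul_pow_mem_pbwDegLT hc (show n' + n < m + n by omega)

theorem HasUnitLeadingProducts.mul_mem_pbwDegLT (hB : E.HasUnitLeadingProducts D i) {a r : R}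
    (ha : a ∈ E.pbwLattice D i) (hr : r ∈ E.pbwDegLT D i m) : a * r ∈ E.pbwDegLT D i m := by
  refine (AddSubgroup.closure_le
    (K := (E.pbwDegLT D i m).comap (AddMonoidHom.mulLeft a))).2 ?_ hr
  rintro _ ⟨c, hc, n, hn, rfl⟩
  simpa [mul_assoc] using mul_pow_mem_pbwDegLT (hB.mul_mem_pbwLattice ha hc) hn

theorem x_mul_mem_pbwDegLT (hθ : Set.MapsTo (E.θ i) (E.pbwLattice D i) (E.pbwLattice D i))
    (hδ : Set.MapsTo (E.δ i) (E.pbwLattice D i) (E.pbwLattice D i)) {r : R}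
    (hr : r ∈ E.pbwDegLT D i m) : E.x i * r ∈ E.pbwDegLT D i (m + 1) := by
  refine (AddSubgroup.closure_le
    (K := (E.pbwDegLT D i (m + 1)).comap (AddMonoidHom.mulLeft (E.x i)))).2 ?_ hr
  rintro _ ⟨c, hc, n, hn, rfl⟩
  have hore : E.x i * (c * E.x i ^ n) = E.θ i c * E.x i ^ (n + 1) + E.δ i c * E.x i ^ n := by
    rw [← mul_assoc, E.ore i c (mem_Rk_of_mem_pbwLattice hc), add_mul, mul_assoc, ← pow_succ']
  simpa [hore] using add_mem (mul_pow_mem_pbwDegLT (hθ hc) (show n + 1 < m + 1 by omega))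
    (mul_pow_mem_pbwDegLT (hδ hc) (show n < m + 1 by omega))

theorem exists_pow_mul_pbw_eq (hθ : Set.MapsTo (E.θ i) (E.pbwLattice D i) (E.pbwLattice D i))
    (hδ : Set.MapsTo (E.δ i) (E.pbwLattice D i) (E.pbwLattice D i)) {g : Fin N → ℕ}
    (hg : SupportedBelow i g) {Λ : K} (hΛ : E.θ i (E.pbw g) = Λ • E.pbw g) (hΛD : Λ ∈ D) (n : ℕ) :
    ∃ r ∈ E.pbwDegLT D i n, E.x i ^ n * E.pbw g = Λ ^ n • (E.pbw g * E.x i ^ n) + r := by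
  induction n with
  | zero => exact ⟨0, zero_mem _, by simp⟩
  | succ n ih =>
    obtain ⟨r, hr, hxr⟩ := ih
    have hδ' : Λ ^ n • E.δ i (E.pbw g) ∈ E.pbwLattice D i :=
      smul_mem_pbwLattice (pow_mem hΛD n) (hδ (pbw_mem_pbwLattice hg))
    refine ⟨Λ ^ n • E.δ i (E.pbw g) * E.x i ^ n + E.x i * r,
      add_mem (mul_pow_mem_pbwDegLT hδ' (Nat.lt_succ_self n)) (x_mul_mem_pbwDegLT hθ hδ hr), ?_⟩
    calc E.x i ^ (n + 1) * E.pbw g = E.x i * (E.x i ^ n * E.pbw g) := by rw [pow_succ', mul_assoc]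
      _ = Λ ^ n • ((E.θ i (E.pbw g) * E.x i + E.δ i (E.pbw g)) * E.x i ^ n) + E.x i * r := by
        rw [hxr, mul_add, mul_smul_comm, ← mul_assoc, E.ore i _ (E.pbw_mem_Rk hg)]
      _ = Λ ^ (n + 1) • (E.pbw g * E.x i ^ (n + 1)) +
          (Λ ^ n • E.δ i (E.pbw g) * E.x i ^ n + E.x i * r) := by
        rw [hΛ, add_mul, smul_add, smul_mul_assoc, smul_mul_assoc, smul_smul, ← pow_succ,
          mul_assoc, ← pow_succ', smul_mul_assoc, add_assoc]

end DegreeFiltration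

theorem HasUnitLeadingProducts.succ (hD : IsDForm D E) {i : Fin N}
    (hB : E.HasUnitLeadingProducts D i) : E.HasUnitLeadingProducts D (i + 1) := by
  intro f g hf hg
  obtain ⟨f₀, m, hf₀, rfl⟩ := hf.exists_eq_add_single
  obtain ⟨g₀, n, hg₀, rfl⟩ := hg.exists_eq_add_single
  obtain ⟨Λ, hΛ⟩ := E.exists_theta_pbw_eq_smul hg₀
  have hΛu := isUnitIn_of_theta_pbw hD hB hg₀ hΛ
  obtain ⟨r₁, hr₁, hx⟩ :=
    exists_pow_mul_pbw_eq (mapsTo_theta hD hB) (mapsTo_delta hD hB) hg₀ hΛ hΛu.1 m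
  obtain ⟨t, ht, r₀, hr₀, hr₀lt, h₀⟩ := hB f₀ g₀ hf₀ hg₀
  have hsum : f₀ + Pi.single i m + (g₀ + Pi.single i n) = f₀ + g₀ + Pi.single i (m + n) := by
    rw [Pi.single_add]; abel
  have hr₁' : E.pbw f₀ * r₁ * E.x i ^ n ∈ E.pbwDegLT D i (m + n) :=
    mul_pow_mem_pbwDegLT_add (hB.mul_mem_pbwDegLT (pbw_mem_pbwLattice hf₀) hr₁) n
  refine ⟨Λ ^ m * t, isUnitIn_mul (isUnitIn_pow hΛu m) ht,
    Λ ^ m • (r₀ * E.x i ^ (m + n)) + E.pbw f₀ * r₁ * E.x i ^ n,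
    add_mem (smul_mem_pbwLattice (pow_mem hΛu.1 m) (mul_pow_mem_pbwLattice_succ hr₀ _))
      (pbwDegLT_le_pbwLattice hr₁'), ?_, ?_⟩
  · rw [hsum]
    exact add_mem (Submodule.smul_mem _ _ (mul_pow_mem_pbwSpanLT_add_single (hf₀.add hg₀) hr₀lt _))
      (pbwDegLT_le_pbwSpanLT ((hf₀.add hg₀).add_single _) (by simp [hf₀ i le_rfl, hg₀ i le_rfl])
        hr₁')
  · rw [hsum, E.pbw_add_single hf₀, E.pbw_add_single hg₀, E.pbw_add_single (hf₀.add hg₀)]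
    calc E.pbw f₀ * E.x i ^ m * (E.pbw g₀ * E.x i ^ n)
        = E.pbw f₀ * (E.x i ^ m * E.pbw g₀) * E.x i ^ n := by simp only [mul_assoc]
      _ = Λ ^ m • (E.pbw f₀ * E.pbw g₀ * E.x i ^ (m + n)) + E.pbw f₀ * r₁ * E.x i ^ n := by
        rw [hx, pow_add]
        simp only [mul_add, add_mul, mul_smul_comm, smul_mul_assoc, mul_assoc]
      _ = (Λ ^ m * t) • (E.pbw (f₀ + g₀) * E.x i ^ (m + n)) +
          (Λ ^ m • (r₀ * E.x i ^ (m + n)) + E.pbw f₀ * r₁ * E.x i ^ n) := by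
        rw [h₀, add_mul, smul_add, smul_mul_assoc, smul_smul, add_assoc]

theorem hasUnitLeadingProducts_zero : E.HasUnitLeadingProducts D 0 := by
  intro f g hf hg
  obtain rfl := hf.eq_zero
  obtain rfl := hg.eq_zero
  exact ⟨1, ⟨D.one_mem, one_ne_zero, by simp⟩, 0, zero_mem _, zero_mem _,
    by simp [E.pbw_zero]⟩

theorem hasUnitLeadingProducts (hD : IsDForm D E) {k : ℕ} (hk : k ≤ N) :
    E.HasUnitLeadingProducts D k := by
  induction k with
  | zero => exact hasUnitLeadingProducts_zero
  | succ k ih => exact HasUnitLeadingProducts.succ (i := ⟨k, hk⟩) hD (ih (by omega))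

theorem HasUnitLeadingProducts.mul_mem_pbwSpanLT (hB : E.HasUnitLeadingProducts D N)
    {S T : Set (Fin N → ℕ)} {F : Fin N → ℕ}
    (hST : ∀ f ∈ S, ∀ g ∈ T, toColex (f + g) < toColex F) {a b : R}
    (ha : a ∈ Submodule.span K (E.pbw '' S)) (hb : b ∈ Submodule.span K (E.pbw '' T)) :
    a * b ∈ E.pbwSpanLT F := by
  have hab := Submodule.mul_mem_mul ha hb
  rw [Submodule.span_mul_span] at hab
  refine Submodule.span_le.2 ?_ hab
  rintro _ ⟨_, ⟨f, hf, rfl⟩, _, ⟨g, hg, rfl⟩, rfl⟩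
  obtain ⟨t, -, r, -, hr, hfg⟩ :=
    hB f g (SupportedBelow.of_card_le le_rfl f) (SupportedBelow.of_card_le le_rfl g)
  change E.pbw f * E.pbw g ∈ E.pbwSpanLT F
  rw [hfg]
  exact add_mem (Submodule.smul_mem _ t (Submodule.subset_span ⟨_, hST f hf g hg, rfl⟩))
    (pbwSpanLT_mono (hST f hf g hg).le hr)

theorem HasUnitLeadingProducts.repr_mul_add (hB : E.HasUnitLeadingProducts D N)
    {f g : Fin N → ℕ} {u v : R} (hu : u ∈ E.pbwSpanLE f) (hv : v ∈ E.pbwSpanLE g) :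
    ∃ t, isUnitIn K D t ∧
      E.pbw.repr (u * v) (f + g) = t * (E.pbw.repr u f * E.pbw.repr v g) := by
  obtain ⟨t, ht, r, -, hr, hfg⟩ :=
    hB f g (SupportedBelow.of_card_le le_rfl f) (SupportedBelow.of_card_le le_rfl g)
  set a := E.pbw.repr u f
  set b := E.pbw.repr v g
  have hlower : u * v - (a * b) • (E.pbw f * E.pbw g) ∈ E.pbwSpanLT (f + g) := by
    have hsplit : u * v - (a * b) • (E.pbw f * E.pbw g) =
        (u - a • E.pbw f) * v + a • (E.pbw f * (v - b • E.pbw g)) := by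
      simp only [sub_mul, mul_sub, smul_mul_assoc, mul_smul_comm, smul_sub, smul_smul]
      abel
    rw [hsplit]
    refine add_mem (hB.mul_mem_pbwSpanLT (fun _ hf' _ hg' => add_lt_add_of_lt_of_le hf' hg')
      (sub_smul_pbw_mem_pbwSpanLT hu) hv) (Submodule.smul_mem _ a ?_)
    exact hB.mul_mem_pbwSpanLT (fun _ hf' _ hg' => add_lt_add_of_le_of_lt hf' hg')
      (show E.pbw f ∈ E.pbwSpanLE f from
        Submodule.subset_span ⟨f, show toColex f ≤ toColex f from le_rfl, rfl⟩)
      (sub_smul_pbw_mem_pbwSpanLT hv)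
  have hlead : E.pbw.repr (E.pbw f * E.pbw g) (f + g) = t := by
    rw [hfg, LinearEquiv.map_add, LinearEquiv.map_smul, Finsupp.add_apply, Finsupp.smul_apply,
      E.pbw.repr_self, Finsupp.single_eq_same, repr_eq_zero_of_mem_pbwSpanLT hr, smul_eq_mul,
      mul_one, add_zero]
  have h := repr_eq_zero_of_mem_pbwSpanLT hlower
  rw [map_sub, map_smul, Finsupp.sub_apply, Finsupp.smul_apply, hlead,
    sub_eq_zero, smul_eq_mul] at h
  exact ⟨t, ht, by rw [h, mul_comm]⟩

section Divisibility

variable (hB : E.HasUnitLeadingProducts D N) {v : R} {s : K} {g : Fin N → ℕ}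
  (hlead : IsLeadingTerm E v s g) (hs : isUnitIn K D s) (d : K)
include hB hlead hs

theorem exists_repr_eq_mul_of_mul_eq_smul {u w : R} {f : Fin N → ℕ} (hu : u ∈ E.pbwSpanLE f)
    (hw : w ∈ E.pbwLattice D N) (huv : u * v = d • w) : ∃ e ∈ D, E.pbw.repr u f = d * e := by
  obtain ⟨t, ht, hmul⟩ := hB.repr_mul_add hu (mem_pbwSpanLE_of_isLeadingTerm hlead)
  rw [huv, map_smul, Finsupp.smul_apply, smul_eq_mul, hlead.2.1] at hmul
  refine ⟨t⁻¹ * s⁻¹ * E.pbw.repr w (f + g),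
    mul_mem (mul_mem ht.2.2 hs.2.2) (repr_mem_of_mem_pbwLattice hw _), ?_⟩
  have ht0 := ht.2.1
  have hs0 := hs.2.1
  field_simp
  linear_combination hmul.symm

theorem exists_eq_smul_of_mul_eq_smul (hv : v ∈ E.pbwLattice D N) {u : R}
    (hu : u ∈ E.pbwLattice D N) (huv : ∃ w ∈ E.pbwLattice D N, u * v = d • w) :
    ∃ w ∈ E.pbwLattice D N, u = d • w := by
  induction hn : (E.pbw.repr u).support.card using Nat.strong_induction_on generalizing u with
  | _ n ih =>
    obtain ⟨w, hw, huv⟩ := huv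
    obtain hu0 | hne := (E.pbw.repr u).support.eq_empty_or_nonempty
    · exact ⟨0, zero_mem _, by simpa using hu0⟩
    obtain ⟨f, hf, hmax⟩ := (E.pbw.repr u).support.exists_max_image toColex hne
    have hpbw : E.pbw f ∈ E.pbwLattice D N :=
      pbw_mem_pbwLattice (SupportedBelow.of_card_le le_rfl f)
    obtain ⟨e, he, hue⟩ :=
      exists_repr_eq_mul_of_mul_eq_smul hB hlead hs d (E.pbw.mem_span_image.2 hmax) hw huv
    have hcard : (E.pbw.repr (u - E.pbw.repr u f • E.pbw f)).support.card < n := by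
      rw [Module.Basis.repr_sub_smul_self, Finsupp.support_erase, ← hn]
      exact Finset.card_erase_lt_of_mem hf
    obtain ⟨w', hw', hu'⟩ := ih _ hcard
      (sub_mem hu (smul_mem_pbwLattice (repr_mem_of_mem_pbwLattice hu f) hpbw))
      ⟨w - e • (E.pbw f * v),
        sub_mem hw (smul_mem_pbwLattice he (hB.mul_mem_pbwLattice hpbw hv)),
        by rw [sub_mul, huv, hue, mul_smul, smul_mul_assoc, smul_mul_assoc, smul_sub]⟩ rfl
    exact ⟨w' + e • E.pbw f, add_mem hw' (smul_mem_pbwLattice he hpbw),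
      by rw [smul_add, ← hu', hue, mul_smul, sub_add_cancel]⟩

end Divisibility

theorem DRfull_eq_DRk : DRfull K D E.x = DRk K D E.x N := by
  unfold DRfull DRk
  congr 1
  funext i
  exact propext (iff_of_true trivial i.isLt)

theorem mem_DRfull_iff (hD : IsDForm D E) {r : R} :
    r ∈ DRfull K D E.x ↔ r ∈ E.pbwLattice D N := by
  rw [DRfull_eq_DRk]
  exact ⟨(hasUnitLeadingProducts hD le_rfl).mem_pbwLattice_of_mem_DRk, mem_DRk_of_mem_pbwLattice⟩

end CGLExt

theorem d_dvd_of_lc_unit_general {K : Type} [Field K] {R : Type} [Ring R] [Algebra K R] {N : ℕ}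
    (E : CGLExt K R N) (D : Subring K) (hD : IsDForm D E)
    (d : K)
    (u v : R) (hu : u ∈ DRfull K D E.x)
    (hv : v ∈ DRfull K D E.x)
    (hdvd : ∃ w ∈ DRfull K D E.x, u * v = algebraMap K R d * w)
    (hlc : ∃ (t : K) (f : Fin N → ℕ), IsLeadingTerm E v t f ∧ isUnitIn K D t) :
    ∃ w ∈ DRfull K D E.x, u = algebraMap K R d * w := by
  obtain ⟨s, g, hlead, hs⟩ := hlc
  obtain ⟨w, hw, huv⟩ := hdvd
  rw [CGLExt.mem_DRfull_iff hD] at hu hv hw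
  obtain ⟨w', hw', hu'⟩ := CGLExt.exists_eq_smul_of_mul_eq_smul
    (CGLExt.hasUnitLeadingProducts hD le_rfl) hlead hs d hv hu
    ⟨w, hw, by rw [huv, Algebra.smul_def]⟩
  exact ⟨w', (CGLExt.mem_DRfull_iff hD).2 hw', by rw [hu', Algebra.smul_def]⟩

/-- **Lemma (cancelling scalar divisors).** Let `R` be a CGL extension whose
presentation has a `D`-form `R_D = D⟨x_1,…,x_N⟩`. Let `d ∈ D \ {0}` and
`u, v ∈ R_D \ {0}` with `d ∣ uv` in `R_D`. If the leading coefficient of `v` lies in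
`D^×`, then `d ∣ u` in `R_D`. -/
theorem d_dvd_of_lc_unit {K : Type} [Field K] {R : Type} [Ring R] [Algebra K R] {N : ℕ}
    (E : CGLExt K R N) (D : Subring K) (hD : IsDForm D E)
    (d : K) (hdD : d ∈ D) (hd0 : d ≠ 0)
    (u v : R) (hu : u ∈ DRfull K D E.x) (hu0 : u ≠ 0)
    (hv : v ∈ DRfull K D E.x) (hv0 : v ≠ 0)
    (hdvd : ∃ w ∈ DRfull K D E.x, u * v = algebraMap K R d * w)
    (hlc : ∃ (t : K) (f : Fin N → ℕ), IsLeadingTerm E v t f ∧ isUnitIn K D t) :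
    ∃ w ∈ DRfull K D E.x, u = algebraMap K R d * w :=
  d_dvd_of_lc_unit_general E D hD d u v hu hv hdvd hlc

end GYint
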